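/- Suppose the bipartite graph 𝒢 determined by 𝔥 is connected and Δ := max(D, D̂) ≥ 3. Then the ZMod 2–dimension ν of the kernel {a : V → ZMod 2 | 𝔥.mulVec a = 0} satisfies ν ≤ (1 − 1/(2Δ)) · card V. -/

import Mathlib

open scoped Classical

section

variable {Vhat V : Type*}

/-- The bipartite (Tanner) graph on `Vhat ⊕ V` associated to the biadjacency matrix `𝔥`. -/
def bipGraph (𝔥 : Matrix Vhat V (ZMod 2)) : SimpleGraph (Vhat ⊕ V) where
  Adj x y := match x, y with
    | Sum.inl a, Sum.inr b => 𝔥 a b = 1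
    | Sum.inr b, Sum.inl a => 𝔥 a b = 1
    | _, _ => False
  symm := ⟨by intro x y hxy; cases x <;> cases y <;> simp_all⟩
  loopless := ⟨by intro x hx; cases x <;> simp_all⟩

/-- STATEMENT 9: if the Tanner graph is connected, right-degrees are at most `D`, left-degrees
are at most `D̂`, and `Δ = max(D, D̂) ≥ 3`, then the dimension `ν` of `ker 𝔥` over `ZMod 2`
satisfies `ν ≤ (1 − 1/(2Δ))·|V|`. -/
theorem kernel_dimension_bound
    [Fintype Vhat] [Fintype V] [DecidableEq Vhat] [DecidableEq V]
    [Nonempty Vhat] [Nonempty V]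
    (𝔥 : Matrix Vhat V (ZMod 2)) (D Dhat : ℕ)
    (hconn : (bipGraph 𝔥).Connected)
    (hdegV : ∀ v : V, (Finset.univ.filter fun w : Vhat => 𝔥 w v = 1).card ≤ D)
    (hdegVhat : ∀ w : Vhat, (Finset.univ.filter fun v : V => 𝔥 w v = 1).card ≤ Dhat)
    (hΔ : 3 ≤ max D Dhat) :
    (Module.finrank (ZMod 2) (LinearMap.ker 𝔥.mulVecLin) : ℝ) ≤
      (1 - 1 / (2 * (max D Dhat : ℝ))) * Fintype.card V := by
  classical
  -- Step 1: every column of 𝔥 is nonzero, by connectedness.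
  have hcol : ∀ v : V, ∃ w : Vhat, 𝔥 w v = 1 := by
    intro v
    obtain ⟨w0⟩ := ‹Nonempty Vhat›
    obtain ⟨p⟩ := hconn (Sum.inr v) (Sum.inl w0)
    cases p with
    | cons h p =>
      rename_i x
      cases x with
      | inl a => exact ⟨a, h⟩
      | inr b => exact absurd h (by simp [bipGraph])
  -- Step 2: extract a linearly independent spanning subset of the rows.
  obtain ⟨t, hts, hspan, hli⟩ :=
    exists_linearIndependent (ZMod 2) (Set.range (𝔥 : Vhat → V → ZMod 2))
  have htfin : t.Finite := hli.setFinite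
  haveI : Fintype t := htfin.fintype
  -- rank = card of t
  have hrank : 𝔥.rank = t.toFinset.card := by
    rw [Matrix.rank_eq_finrank_span_row]
    change Module.finrank (ZMod 2) (Submodule.span (ZMod 2) (Set.range 𝔥)) = _
    rw [← hspan, finrank_span_set_eq_card hli]
  -- Step 3: every v has some row of t equal to 1 at v.
  have hv1 : ∀ v : V, ∃ x ∈ t, x v = 1 := by
    intro v
    obtain ⟨w, hw⟩ := hcol v
    by_contra hcon
    push_neg at hcon
    have hker : Submodule.span (ZMod 2) t ≤
        LinearMap.ker (LinearMap.proj v : (V → ZMod 2) →ₗ[ZMod 2] ZMod 2) := by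
      rw [Submodule.span_le]
      intro x hx
      simp only [SetLike.mem_coe, LinearMap.mem_ker, LinearMap.proj_apply]
      have h2 : ∀ a : ZMod 2, a ≠ 1 → a = 0 := by decide
      exact h2 _ (hcon x hx)
    have hmem : (𝔥 w : V → ZMod 2) ∈ Submodule.span (ZMod 2) t := by
      rw [hspan]
      exact Submodule.subset_span ⟨w, rfl⟩
    have := hker hmem
    simp only [LinearMap.mem_ker, LinearMap.proj_apply] at this
    rw [hw] at this
    exact one_ne_zero this
  -- Step 4: card V ≤ Dhat * card t.
  have hcover : (Finset.univ : Finset V) ⊆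
      t.toFinset.biUnion (fun x => Finset.univ.filter fun v => x v = 1) := by
    intro v _
    obtain ⟨x, hx, hxv⟩ := hv1 v
    exact Finset.mem_biUnion.2 ⟨x, Set.mem_toFinset.2 hx, Finset.mem_filter.2 ⟨Finset.mem_univ _, hxv⟩⟩
  have hcardV : Fintype.card V ≤ t.toFinset.card * Dhat := by
    calc Fintype.card V = (Finset.univ : Finset V).card := (Finset.card_univ).symm
      _ ≤ (t.toFinset.biUnion (fun x => Finset.univ.filter fun v => x v = 1)).card :=
          Finset.card_le_card hcover
      _ ≤ ∑ x ∈ t.toFinset, (Finset.univ.filter fun v => x v = 1).card :=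
          Finset.card_biUnion_le
      _ ≤ ∑ _x ∈ t.toFinset, Dhat := by
          refine Finset.sum_le_sum fun x hx => ?_
          obtain ⟨w, hw⟩ := hts (Set.mem_toFinset.1 hx)
          subst hw
          exact hdegVhat w
      _ = t.toFinset.card * Dhat := by rw [Finset.sum_const, smul_eq_mul]
  -- Step 5: rank-nullity.
  have hrn : Module.finrank (ZMod 2) (LinearMap.range 𝔥.mulVecLin)
      + Module.finrank (ZMod 2) (LinearMap.ker 𝔥.mulVecLin) = Fintype.card V := by
    rw [LinearMap.finrank_range_add_finrank_ker 𝔥.mulVecLin, Module.finrank_pi]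
  -- Step 6: arithmetic.
  set ν := Module.finrank (ZMod 2) (LinearMap.ker 𝔥.mulVecLin)
  set r := Module.finrank (ZMod 2) (LinearMap.range 𝔥.mulVecLin)
  have hr : r = t.toFinset.card := hrank
  have hn : Fintype.card V ≤ r * Dhat := hr ▸ hcardV
  have hDh : Dhat ≤ max D Dhat := le_max_right _ _
  have hnΔ : Fintype.card V ≤ r * max D Dhat :=
    hn.trans (Nat.mul_le_mul_left r hDh)
  have hΔpos : (0 : ℝ) < 2 * (max D Dhat : ℝ) := by
    have : (3 : ℝ) ≤ (max D Dhat : ℝ) := by exact_mod_cast hΔ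
    linarith
  have hnR : (Fintype.card V : ℝ) ≤ r * (2 * (max D Dhat : ℝ)) := by
    have h1 : (Fintype.card V : ℝ) ≤ (r : ℝ) * (max D Dhat : ℝ) := by exact_mod_cast hnΔ
    nlinarith [Nat.cast_nonneg (α := ℝ) r, Nat.cast_nonneg (α := ℝ) (max D Dhat)]
  have hkey : (Fintype.card V : ℝ) / (2 * (max D Dhat : ℝ)) ≤ (r : ℝ) :=
    (div_le_iff₀ hΔpos).2 hnR
  have hν : (ν : ℝ) = (Fintype.card V : ℝ) - r := by
    have : (r : ℝ) + (ν : ℝ) = (Fintype.card V : ℝ) := by exact_mod_cast hrn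
    linarith
  have hring : (1 - 1 / (2 * (max D Dhat : ℝ))) * (Fintype.card V : ℝ)
      = (Fintype.card V : ℝ) - (Fintype.card V : ℝ) / (2 * (max D Dhat : ℝ)) := by
    field_simp
  rw [hν, hring]
  linarith

end
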